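/- Let c ∈ ℝ and let φ, ρ : [0,π] → ℝ be continuously differentiable. Set φ_n^D(x) := √(2/π) sin(nx) and ψ_n(x) := (n²+c²)^{−1/2} √(2/π)(n cos(nx) + c sin(nx)); define γ_n^D(f) := ∫₀^π f φ_n^D and γ_n^R(f) := ∫₀^π f ψ_n. For t > 0 set β_R(t) := ∑_{n=1}^∞ e^{−t(n²+c²)} γ_n^R(φ) γ_n^R(ρ). Then for every t > 0 the series converges, β_R is differentiable at t, and β_R'(t) = −∑_{n=1}^∞ e^{−t(n²+c²)} γ_n^D(−φ' + cφ) γ_n^D(−ρ' + cρ). -/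

import Mathlib

/-
Integrating by parts against `√(2/π) sin(nx)`, which vanishes at `0` and `π`, gives
`γ_n^D(-f' + c f) = √λ_n γ_n^R(f)`, so the claimed derivative is the termwise derivative
`-∑ λ_n e^{-tλ_n} γ_n^R(φ) γ_n^R(ρ)`. Since `|ψ_n| ≤ √(2/π)` the coefficients are bounded, and
`λ_n e^{-sλ_n} ≤ (4/t) e^{-nt/4}` for all `s > t/2`, so termwise differentiation is justified.
-/

noncomputable section

/-- Fourier coefficient against the Dirichlet eigenfunction `√(2/π) sin(n x)` on `[0,π]`. -/
def gammaD (n : ℕ) (f : ℝ → ℝ) : ℝ :=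
  ∫ x in (0 : ℝ)..Real.pi, f x * (Real.sqrt (2 / Real.pi) * Real.sin ((n : ℝ) * x))

/-- The Robin eigenfunctions `ψ_n = (n²+c²)^{-1/2} A φ_n^D` on `[0,π]`. -/
def robinEigen (c : ℝ) (n : ℕ) (x : ℝ) : ℝ :=
  (Real.sqrt ((n : ℝ) ^ 2 + c ^ 2))⁻¹ * Real.sqrt (2 / Real.pi) *
    ((n : ℝ) * Real.cos ((n : ℝ) * x) + c * Real.sin ((n : ℝ) * x))

/-- Fourier coefficient against the Robin eigenfunction `ψ_n` on `[0,π]`. -/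
def gammaR (c : ℝ) (n : ℕ) (f : ℝ → ℝ) : ℝ :=
  ∫ x in (0 : ℝ)..Real.pi, f x * robinEigen c n x

open Real Set MeasureTheory intervalIntegral

section IntegrationByParts

variable {f v v' : ℝ → ℝ} {a b : ℝ}

theorem ContDiffOn.intervalIntegrable_deriv (hab : a ≤ b) (hf : ContDiffOn ℝ 1 f (Icc a b)) :
    IntervalIntegrable (deriv f) volume a b := by
  rcases hab.eq_or_lt with rfl | hlt
  · exact .refl
  rw [intervalIntegrable_iff_integrableOn_Ioo_of_le hab]
  have hcont : ContinuousOn (derivWithin f (Icc a b)) (Icc a b) :=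
    hf.continuousOn_derivWithin (uniqueDiffOn_Icc hlt) le_rfl
  refine (hcont.integrableOn_Icc.mono_set Ioo_subset_Icc_self).congr_fun (fun x hx => ?_)
    measurableSet_Ioo
  exact derivWithin_of_mem_nhds (Icc_mem_nhds hx.1 hx.2)

theorem integral_deriv_mul_eq_neg_integral_mul_deriv (hab : a ≤ b)
    (hf : ContDiffOn ℝ 1 f (Icc a b)) (hv : ∀ x, HasDerivAt v (v' x) x) (hv' : Continuous v')
    (hva : v a = 0) (hvb : v b = 0) :
    ∫ x in a..b, deriv f x * v x = -∫ x in a..b, f x * v' x := by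
  have hf_diff : ∀ x ∈ Ioo (min a b) (max a b), HasDerivAt f (deriv f x) x := by
    intro x hx
    rw [min_eq_left hab, max_eq_right hab] at hx
    exact ((hf.differentiableOn one_ne_zero x (Ioo_subset_Icc_self hx)).differentiableAt
      (Icc_mem_nhds hx.1 hx.2)).hasDerivAt
  have hf_cont : ContinuousOn f (uIcc a b) := by
    rw [uIcc_of_le hab]; exact hf.continuousOn
  have hderiv_int := hf.intervalIntegrable_deriv hab
  have hibp := integral_deriv_mul_eq_sub_of_hasDerivAt hf_cont
    (fun x _ => (hv x).continuousAt.continuousWithinAt) (fun x hx => hf_diff x hx)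
    (fun x _ => hv x) hderiv_int (hv'.intervalIntegrable a b)
  have hfv'_int : IntervalIntegrable (fun x => f x * v' x) volume a b :=
    (hf_cont.mul hv'.continuousOn).intervalIntegrable
  rw [integral_add (hderiv_int.mul_continuousOn fun x _ => (hv x).continuousAt.continuousWithinAt)
    hfv'_int, hva, hvb] at hibp
  linarith

end IntegrationByParts

section ExpSeries

variable {lam a : ℕ → ℝ} {C t : ℝ}

theorem exp_neg_mul_le_exp_neg_pow {r x : ℝ} {n : ℕ} (hr : 0 ≤ r) (hx : (n : ℝ) ≤ x) :
    exp (-r * x) ≤ exp (-r) ^ n := by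
  rw [← exp_nat_mul]
  exact exp_le_exp.2 (by nlinarith)

theorem mul_exp_neg_mul_le {r : ℝ} (hr : 0 < r) (x : ℝ) :
    x * exp (-r * x) ≤ 2 / r * exp (-(r / 2) * x) := by
  have hhalf : r / 2 * x * exp (-(r / 2 * x)) ≤ 1 :=
    (mul_exp_neg_le_exp_neg_one _).trans (exp_le_one_iff.2 (by norm_num))
  have hx : x * exp (-(r / 2) * x) ≤ 2 / r := by
    rw [le_div_iff₀ hr, neg_mul]
    linarith
  calc x * exp (-r * x) = x * exp (-(r / 2) * x) * exp (-(r / 2) * x) := by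
        rw [mul_assoc, ← exp_add]; ring_nf
    _ ≤ 2 / r * exp (-(r / 2) * x) := by gcongr

theorem summable_exp_neg_mul_mul (hlam : ∀ n : ℕ, (n : ℝ) ≤ lam n) (ha : ∀ n, ‖a n‖ ≤ C)
    (ht : 0 < t) : Summable fun n => exp (-t * lam n) * a n := by
  refine .of_norm_bounded ((summable_geometric_of_lt_one (exp_nonneg _)
    (exp_lt_one_iff.2 (neg_lt_zero.2 ht))).mul_left C) fun n => ?_
  rw [norm_mul, norm_of_nonneg (exp_nonneg _), mul_comm C]
  exact mul_le_mul (exp_neg_mul_le_exp_neg_pow ht.le (hlam n)) (ha n) (norm_nonneg _)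
    (by positivity)

theorem norm_neg_mul_exp_neg_mul_mul_le (hlam : ∀ n : ℕ, (n : ℝ) ≤ lam n) (ha : ∀ n, ‖a n‖ ≤ C)
    (ht : 0 < t) {s : ℝ} (hs : t / 2 < s) (n : ℕ) :
    ‖-lam n * exp (-s * lam n) * a n‖ ≤ 4 / t * C * exp (-(t / 4)) ^ n := by
  have hlam0 : 0 ≤ lam n := (Nat.cast_nonneg n).trans (hlam n)
  have hdecay : lam n * exp (-s * lam n) ≤ 4 / t * exp (-(t / 4)) ^ n :=
    calc lam n * exp (-s * lam n) ≤ lam n * exp (-(t / 2) * lam n) := by gcongr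
      _ ≤ 2 / (t / 2) * exp (-(t / 2 / 2) * lam n) := mul_exp_neg_mul_le (by positivity) _
      _ ≤ 4 / t * exp (-(t / 4)) ^ n := by
          rw [show 2 / (t / 2) = 4 / t by field_simp; norm_num, show t / 2 / 2 = t / 4 by ring]
          gcongr
          exact exp_neg_mul_le_exp_neg_pow (by positivity) (hlam n)
  rw [norm_mul, norm_mul, norm_neg, norm_of_nonneg hlam0, norm_of_nonneg (exp_nonneg _),
    mul_right_comm (4 / t)]
  exact mul_le_mul hdecay (ha n) (norm_nonneg _) (by positivity)

theorem hasDerivAt_tsum_exp_neg_mul_mul (hlam : ∀ n : ℕ, (n : ℝ) ≤ lam n) (ha : ∀ n, ‖a n‖ ≤ C)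
    (ht : 0 < t) :
    HasDerivAt (fun s => ∑' n, exp (-s * lam n) * a n)
      (∑' n, -lam n * exp (-t * lam n) * a n) t := by
  have hterm : ∀ n s, HasDerivAt (fun s => exp (-s * lam n) * a n)
      (-lam n * exp (-s * lam n) * a n) s := fun n s =>
    ((((hasDerivAt_neg s).mul_const (lam n)).exp).mul_const (a n)).congr_deriv (by ring)
  have ht_mem : t ∈ Ioi (t / 2) := by simp [ht]
  exact hasDerivAt_tsum_of_isPreconnected
    ((summable_geometric_of_lt_one (exp_nonneg _)
      (exp_lt_one_iff.2 (by linarith))).mul_left (4 / t * C))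
    isOpen_Ioi isPreconnected_Ioi (fun n s _ => hterm n s)
    (fun n s hs => norm_neg_mul_exp_neg_mul_mul_le hlam ha ht hs n)
    ht_mem (summable_exp_neg_mul_mul hlam ha ht) ht_mem

end ExpSeries

/-- `√λ_n ψ_n = A φ_n^D`; for `n = c = 0` both sides vanish because `0⁻¹ = 0`. -/
theorem sqrt_mul_robinEigen (c : ℝ) (n : ℕ) (x : ℝ) :
    √((n : ℝ) ^ 2 + c ^ 2) * robinEigen c n x =
      √(2 / π) * ((n : ℝ) * cos ((n : ℝ) * x) + c * sin ((n : ℝ) * x)) := by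
  rcases eq_or_ne ((n : ℝ) ^ 2 + c ^ 2) 0 with h | h
  · have hn : (n : ℝ) = 0 := by nlinarith
    have hc : c = 0 := by nlinarith
    simp [hn, hc]
  · have hsqrt : √((n : ℝ) ^ 2 + c ^ 2) ≠ 0 := by positivity
    rw [robinEigen]
    field_simp

theorem gammaD_Astar_eq_sqrt_mul_gammaR (c : ℝ) {f : ℝ → ℝ}
    (hf : ContDiffOn ℝ 1 f (Icc 0 π)) (n : ℕ) :
    gammaD n (fun x => -deriv f x + c * f x) = √((n : ℝ) ^ 2 + c ^ 2) * gammaR c n f := by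
  set v : ℝ → ℝ := fun x => √(2 / π) * sin (n * x)
  set v' : ℝ → ℝ := fun x => √(2 / π) * (n * cos (n * x))
  have hv : ∀ x, HasDerivAt v (v' x) x := fun x => by
    simpa [v, v', mul_comm] using (((hasDerivAt_id x).const_mul (n : ℝ)).sin).const_mul (√(2 / π))
  have hf_cont : ContinuousOn f (uIcc 0 π) := by rw [uIcc_of_le pi_pos.le]; exact hf.continuousOn
  have hfv_int : IntervalIntegrable (fun x => f x * v x) volume 0 π :=
    (hf_cont.mul (by fun_prop)).intervalIntegrable
  have hfv'_int : IntervalIntegrable (fun x => f x * v' x) volume 0 π :=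
    (hf_cont.mul (by fun_prop)).intervalIntegrable
  have hibp := integral_deriv_mul_eq_neg_integral_mul_deriv pi_pos.le hf hv (by fun_prop)
    (by simp [v]) (by simp [v, sin_nat_mul_pi])
  calc gammaD n (fun x => -deriv f x + c * f x)
      = c * (∫ x in (0)..π, f x * v x) - ∫ x in (0)..π, deriv f x * v x := by
        rw [gammaD, ← intervalIntegral.integral_const_mul, ← integral_sub (hfv_int.const_mul c)
          ((hf.intervalIntegrable_deriv pi_pos.le).mul_continuousOn (by fun_prop))]
        congr 1 with x
        ring
    _ = ∫ x in (0)..π, f x * (v' x + c * v x) := by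
        rw [hibp, sub_neg_eq_add, add_comm, ← intervalIntegral.integral_const_mul,
          ← integral_add hfv'_int (hfv_int.const_mul c)]
        congr 1 with x
        ring
    _ = √((n : ℝ) ^ 2 + c ^ 2) * gammaR c n f := by
        rw [gammaR, ← intervalIntegral.integral_const_mul]
        congr 1 with x
        rw [mul_left_comm (√_), sqrt_mul_robinEigen]
        ring

theorem abs_robinEigen_le (c : ℝ) (n : ℕ) (x : ℝ) : |robinEigen c n x| ≤ √(2 / π) := by
  have hcs : |(n : ℝ) * cos (n * x) + c * sin (n * x)| ≤ √((n : ℝ) ^ 2 + c ^ 2) :=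
    -- Cauchy–Schwarz for `(n, c) · (cos, sin)`
    abs_le_sqrt (by nlinarith [sq_nonneg ((n : ℝ) * sin (n * x) - c * cos (n * x)),
      sin_sq_add_cos_sq ((n : ℝ) * x)])
  rw [robinEigen, abs_mul, abs_mul, abs_of_nonneg (sqrt_nonneg (2 / π)), abs_inv,
    abs_of_nonneg (sqrt_nonneg _), mul_comm _ (√(2 / π)), mul_assoc]
  refine mul_le_of_le_one_right (sqrt_nonneg _) ?_
  rw [← div_eq_inv_mul]
  exact div_le_one_of_le₀ hcs (sqrt_nonneg _)

theorem norm_gammaR_le (c : ℝ) {f : ℝ → ℝ} {M : ℝ} (hM : ∀ x ∈ Icc 0 π, ‖f x‖ ≤ M) (n : ℕ) :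
    ‖gammaR c n f‖ ≤ M * √(2 / π) * π := by
  have hbound : ∀ x ∈ uIoc 0 π, ‖f x * robinEigen c n x‖ ≤ M * √(2 / π) := fun x hx => by
    rw [uIoc_of_le pi_pos.le] at hx
    have hfx := hM x (Ioc_subset_Icc_self hx)
    rw [norm_mul]
    exact mul_le_mul hfx (abs_robinEigen_le c n x) (norm_nonneg _) ((norm_nonneg _).trans hfx)
  simpa [gammaR, abs_of_pos pi_pos] using intervalIntegral.norm_integral_le_of_norm_le_const hbound

theorem robin_heat_content_deriv (c : ℝ) (φ ρ : ℝ → ℝ)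
    (hφ : ContDiffOn ℝ 1 φ (Set.Icc 0 Real.pi)) (hρ : ContDiffOn ℝ 1 ρ (Set.Icc 0 Real.pi)) :
    ∀ t : ℝ, 0 < t →
      (Summable fun n : ℕ =>
        Real.exp (-t * (((n : ℝ) + 1) ^ 2 + c ^ 2)) *
          gammaR c (n + 1) φ * gammaR c (n + 1) ρ) ∧
      HasDerivAt
        (fun s : ℝ => ∑' n : ℕ,
          Real.exp (-s * (((n : ℝ) + 1) ^ 2 + c ^ 2)) *
            gammaR c (n + 1) φ * gammaR c (n + 1) ρ)
        (-∑' n : ℕ,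
          Real.exp (-t * (((n : ℝ) + 1) ^ 2 + c ^ 2)) *
            gammaD (n + 1) (fun x => -(deriv φ x) + c * φ x) *
            gammaD (n + 1) (fun x => -(deriv ρ x) + c * ρ x))
        t := by
  intro t ht
  obtain ⟨Mφ, hMφ⟩ := isCompact_Icc.exists_bound_of_continuousOn hφ.continuousOn
  obtain ⟨Mρ, hMρ⟩ := isCompact_Icc.exists_bound_of_continuousOn hρ.continuousOn
  have hlam : ∀ n : ℕ, (n : ℝ) ≤ ((n : ℝ) + 1) ^ 2 + c ^ 2 := fun n => by nlinarith
  have hcoeff : ∀ n : ℕ, ‖gammaR c (n + 1) φ * gammaR c (n + 1) ρ‖ ≤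
      Mφ * √(2 / π) * π * (Mρ * √(2 / π) * π) := fun n => by
    rw [norm_mul]
    exact mul_le_mul (norm_gammaR_le c hMφ _) (norm_gammaR_le c hMρ _) (norm_nonneg _)
      ((norm_nonneg _).trans (norm_gammaR_le c hMφ 0))
  have hAstar : ∀ n : ℕ,
      -(exp (-t * (((n : ℝ) + 1) ^ 2 + c ^ 2)) *
          gammaD (n + 1) (fun x => -(deriv φ x) + c * φ x) *
          gammaD (n + 1) (fun x => -(deriv ρ x) + c * ρ x)) =
        -(((n : ℝ) + 1) ^ 2 + c ^ 2) * exp (-t * (((n : ℝ) + 1) ^ 2 + c ^ 2)) *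
          gammaR c (n + 1) φ * gammaR c (n + 1) ρ := fun n => by
    rw [gammaD_Astar_eq_sqrt_mul_gammaR c hφ, gammaD_Astar_eq_sqrt_mul_gammaR c hρ]
    push_cast
    linear_combination -(exp (-t * (((n : ℝ) + 1) ^ 2 + c ^ 2)) * gammaR c (n + 1) φ *
      gammaR c (n + 1) ρ) * mul_self_sqrt (by positivity : (0 : ℝ) ≤ ((n : ℝ) + 1) ^ 2 + c ^ 2)
  have hsum := summable_exp_neg_mul_mul hlam hcoeff ht
  have hderiv := hasDerivAt_tsum_exp_neg_mul_mul hlam hcoeff ht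
  simp only [← mul_assoc] at hsum hderiv
  refine ⟨hsum, ?_⟩
  rwa [← tsum_neg, tsum_congr hAstar]
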